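/- For every integer n ≥ 0 and t with t₁+t₂+t₃+t₄=0, the Dirichlet kernel D_n^H(t) = Σ_{k ∈ ℍ_n^*} exp((πi/2) k·t) equals ∏_{j=1}^4 K_n(t_j) - ∏_{j=1}^4 (K_n(t_j) - 1), where K_n(t) = Σ_{l=0}^{n} e^{2πi l t}. -/

import Mathlib

open Real

/-- The finite symmetric index set ℍ_n^*. -/
noncomputable def HstarF (n : ℕ) : Finset (Fin 4 → ℤ) :=
  (Finset.Icc (fun _ : Fin 4 => -(3 * (n : ℤ))) (fun _ : Fin 4 => 3 * (n : ℤ))).filter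
    (fun k => (∑ i, k i) = 0 ∧ (∀ i j : Fin 4, k i % 4 = k j % 4) ∧
      ∀ i j : Fin 4, -(4 * (n : ℤ)) ≤ k i - k j ∧ k i - k j ≤ 4 * (n : ℤ))

/-- The Dirichlet kernel D_n^H. -/
noncomputable def DnH (n : ℕ) (t : Fin 4 → ℝ) : ℂ :=
  ∑ k ∈ HstarF n, Complex.exp ((π : ℂ) * Complex.I / 2 * ∑ i, (k i : ℂ) * (t i : ℂ))

/-- The geometric exponential sum K_n(t) = Σ_{l=0}^n e^{2πilt}. -/
noncomputable def Kn (n : ℕ) (t : ℝ) : ℂ :=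
  ∑ l ∈ Finset.range (n + 1), Complex.exp (2 * (π : ℂ) * Complex.I * (l : ℂ) * (t : ℂ))

/-!
Expanding the products, `∏ Kₙ(tⱼ) - ∏ (Kₙ(tⱼ) - 1)` is the sum of `e(l · t)` over the lattice
points `l ∈ [0, n]⁴` having a vanishing coordinate. The map `l ↦ 4l - (∑ lᵢ)·𝟙` is a bijection from
these points onto `ℍₙ^*`, with inverse "subtract the least coordinate and divide by 4", and since
`∑ tᵢ = 0` it carries `e(l · t)` to `exp((πi/2) k · t)`.
-/

open Finset

theorem Kn_sub_one (n : ℕ) (t : ℝ) :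
    Kn n t - 1 = ∑ l ∈ Icc 1 n, Complex.exp (2 * (π : ℂ) * Complex.I * (l : ℂ) * (t : ℂ)) := by
  rw [Kn, range_eq_Ico, sum_eq_sum_Ico_succ_bot (by omega), Ico_add_one_right_eq_Icc]
  simp

section ExpSums

variable {ι : Type*} [Fintype ι] [DecidableEq ι]

noncomputable def expDot (t : ι → ℝ) (l : ι → ℕ) : ℂ :=
  Complex.exp (2 * (π : ℂ) * Complex.I * ∑ j, (l j : ℂ) * (t j : ℂ))

variable (ι) in
def boxWithZero (n : ℕ) : Finset (ι → ℕ) :=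
  (Fintype.piFinset fun _ => range (n + 1)) \ Fintype.piFinset fun _ => Icc 1 n

theorem mem_boxWithZero {n : ℕ} {l : ι → ℕ} :
    l ∈ boxWithZero ι n ↔ (∀ i, l i ≤ n) ∧ ∃ i, l i = 0 := by
  simp only [boxWithZero, mem_sdiff, Fintype.mem_piFinset, mem_range, mem_Icc, not_forall,
    Nat.lt_succ_iff]
  refine and_congr_right fun hle => exists_congr fun i => ?_
  have := hle i
  omega

theorem prod_sum_exp_eq_sum_piFinset (s : Finset ℕ) (t : ι → ℝ) :
    ∏ j, ∑ l ∈ s, Complex.exp (2 * (π : ℂ) * Complex.I * (l : ℂ) * (t j : ℂ))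
      = ∑ l ∈ Fintype.piFinset fun _ : ι => s, expDot t l := by
  rw [prod_univ_sum]
  refine sum_congr rfl fun l _ => ?_
  rw [expDot, ← Complex.exp_sum, mul_sum]
  simp only [mul_assoc]

theorem prod_Kn_sub_prod_Kn_sub_one (n : ℕ) (t : ι → ℝ) :
    ∏ j, Kn n (t j) - ∏ j, (Kn n (t j) - 1) = ∑ l ∈ boxWithZero ι n, expDot t l := by
  have hsub : Icc 1 n ⊆ range (n + 1) := fun l hl => by
    simp only [mem_Icc, mem_range] at hl ⊢
    omega
  simp only [Kn_sub_one]
  simp only [Kn, prod_sum_exp_eq_sum_piFinset]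
  rw [boxWithZero, sum_sdiff_eq_sub (Fintype.piFinset_subset _ _ fun _ => hsub)]

end ExpSums

section ShiftedBox

variable {ι : Type*} [Fintype ι]

def toHstar (l : ι → ℕ) : ι → ℤ := fun j => 4 * l j - ∑ i, (l i : ℤ)

theorem expDot_eq_exp_toHstar {t : ι → ℝ} (ht : ∑ i, t i = 0) (l : ι → ℕ) :
    expDot t l = Complex.exp ((π : ℂ) * Complex.I / 2 * ∑ i, (toHstar l i : ℂ) * (t i : ℂ)) := by
  have ht' : ∑ i, (t i : ℂ) = 0 := by exact_mod_cast ht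
  have hsum : ∑ i, (toHstar l i : ℂ) * (t i : ℂ)
      = 4 * ∑ i, (l i : ℂ) * (t i : ℂ) - (∑ i, (l i : ℂ)) * ∑ i, (t i : ℂ) := by
    simp only [toHstar]
    push_cast
    simp only [sub_mul, sum_sub_distrib, mul_sum, mul_assoc]
  rw [expDot, hsum, ht', mul_zero, sub_zero]
  ring_nf

theorem sum_le_card_pred_mul_of_eq_zero {l : ι → ℕ} {n : ℕ} (hle : ∀ i, l i ≤ n) {j₀ : ι}
    (h₀ : l j₀ = 0) : ∑ i, l i ≤ (Fintype.card ι - 1) * n := by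
  classical
  rw [← add_sum_erase _ _ (mem_univ j₀), h₀, zero_add]
  calc ∑ i ∈ univ.erase j₀, l i ≤ #(univ.erase j₀) • n := sum_le_card_nsmul _ _ _ fun i _ => hle i
    _ = (Fintype.card ι - 1) * n := by rw [card_erase_of_mem (mem_univ j₀), card_univ, smul_eq_mul]

end ShiftedBox

section Hstar

variable {n : ℕ}

theorem mem_HstarF {k : Fin 4 → ℤ} :
    k ∈ HstarF n ↔ (∀ i, -(3 * (n : ℤ)) ≤ k i ∧ k i ≤ 3 * n) ∧ ∑ i, k i = 0 ∧
      (∀ i j, k i % 4 = k j % 4) ∧ ∀ i j, -(4 * (n : ℤ)) ≤ k i - k j ∧ k i - k j ≤ 4 * n := by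
  simp only [HstarF, mem_filter, mem_Icc, Pi.le_def, forall_and]

theorem toHstar_mem_HstarF {l : Fin 4 → ℕ} (hl : l ∈ boxWithZero (Fin 4) n) :
    toHstar l ∈ HstarF n := by
  obtain ⟨hle, j₀, hj₀⟩ := mem_boxWithZero.1 hl
  have hS : ∑ i, l i ≤ 3 * n := by simpa using sum_le_card_pred_mul_of_eq_zero hle hj₀
  have hl_le : ∀ i, l i ≤ ∑ i, l i := fun i => single_le_sum (fun _ _ => Nat.zero_le _) (mem_univ i)
  have hcast : ∑ i, (l i : ℤ) = ((∑ i, l i : ℕ) : ℤ) := by push_cast; rfl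
  rw [mem_HstarF]
  refine ⟨fun i => ?_, ?_, fun i j => ?_, fun i j => ?_⟩
  · have := hle i
    have := hl_le i
    simp only [toHstar, hcast]
    omega
  · simp [toHstar, sum_sub_distrib, ← mul_sum]
  · simp only [toHstar]
    omega
  · have := hle i
    have := hle j
    simp only [toHstar]
    omega

def ofHstar (k : Fin 4 → ℤ) : Fin 4 → ℕ := fun j => ((k j - univ.inf' univ_nonempty k) / 4).toNat

theorem four_mul_ofHstar {k : Fin 4 → ℤ} (hk : k ∈ HstarF n) (j : Fin 4) :
    4 * (ofHstar k j : ℤ) = k j - univ.inf' univ_nonempty k := by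
  obtain ⟨j₀, -, hj₀⟩ := exists_mem_eq_inf' univ_nonempty k
  have hmin := inf'_le k (mem_univ j)
  have hmod := (mem_HstarF.1 hk).2.2.1 j j₀
  rw [ofHstar]
  omega

theorem ofHstar_mem_boxWithZero {k : Fin 4 → ℤ} (hk : k ∈ HstarF n) :
    ofHstar k ∈ boxWithZero (Fin 4) n := by
  obtain ⟨j₀, -, hj₀⟩ := exists_mem_eq_inf' univ_nonempty k
  have h4 := four_mul_ofHstar hk
  refine mem_boxWithZero.2 ⟨fun i => ?_, j₀, ?_⟩
  · have := (mem_HstarF.1 hk).2.2.2 i j₀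
    have := h4 i
    omega
  · have := h4 j₀
    omega

theorem toHstar_ofHstar {k : Fin 4 → ℤ} (hk : k ∈ HstarF n) : toHstar (ofHstar k) = k := by
  have h4 := four_mul_ofHstar hk
  have hsum : 4 * ∑ i, (ofHstar k i : ℤ) = -4 * univ.inf' univ_nonempty k := by
    rw [mul_sum, sum_congr rfl fun i _ => h4 i, sum_sub_distrib, (mem_HstarF.1 hk).2.1]
    simp
  funext j
  have := h4 j
  simp only [toHstar]
  omega

theorem ofHstar_toHstar {l : Fin 4 → ℕ} (hl : l ∈ boxWithZero (Fin 4) n) :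
    ofHstar (toHstar l) = l := by
  obtain ⟨-, j₀, hj₀⟩ := mem_boxWithZero.1 hl
  have hinf : univ.inf' univ_nonempty (toHstar l) = -∑ i, (l i : ℤ) :=
    le_antisymm ((inf'_le (toHstar l) (mem_univ j₀)).trans_eq (by simp [toHstar, hj₀]))
      (le_inf' _ _ fun i _ => by simp [toHstar])
  funext j
  simp only [ofHstar, hinf, toHstar]
  omega

end Hstar

theorem stmt9 (n : ℕ) (t : Fin 4 → ℝ) (ht : (∑ i, t i) = 0) :
    DnH n t = (∏ j : Fin 4, Kn n (t j)) - ∏ j : Fin 4, (Kn n (t j) - 1) := by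
  rw [prod_Kn_sub_prod_Kn_sub_one, DnH]
  exact (sum_nbij' toHstar ofHstar (fun _ => toHstar_mem_HstarF) (fun _ => ofHstar_mem_boxWithZero)
    (fun _ => ofHstar_toHstar) (fun _ => toHstar_ofHstar)
    (fun l _ => expDot_eq_exp_toHstar ht l)).symm
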